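/- Stein kernel for the von Mises-Fisher distribution on SO(N): for the density p(X|F) ∝ exp(tr(FᵀX)) with parameter F ∈ ℝ^{N×N}, the Riemannian gradient of log p at X is X𝒜(XᵀF), and the Stein kernel is k_p^{vMF}(X,Y) = c(X,Y) + tr[𝒜(Xᵀ(F + τY))ᵀ 𝒜(Yᵀ(F + τX))] · e^{τ tr(XᵀY)}, where c(X,Y) = (τ/2)(N−1) tr(XᵀY) e^{τ tr(XᵀY)}. -/

import Mathlib

open Matrix
open scoped Kronecker

noncomputable section

/-- The orthonormal basis element `E_{ij}` (for `i < j`) of the Lie algebra `so(N)`: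
`√2/2` at entry `(i,j)`, `−√2/2` at `(j,i)`, zeros elsewhere. -/
def Eb (N : ℕ) (i j : Fin N) : Matrix (Fin N) (Fin N) ℝ :=
  (Real.sqrt 2 / 2) • (single i j (1 : ℝ) - single j i (1 : ℝ))

/-- Derivative of `h` at `X` along the left-invariant vector field `X ↦ X·B` on `SO(N)`:
`d/dt h(X exp(tB)) |_{t=0}`. -/
def dirDeriv {N : ℕ} (h : Matrix (Fin N) (Fin N) ℝ → ℝ)
    (B X : Matrix (Fin N) (Fin N) ℝ) : ℝ :=
  deriv (fun t : ℝ => h (X * NormedSpace.exp (t • B))) 0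

/-- Skew-symmetrization `𝒜(A) = (A − Aᵀ)/2`. -/
def skewPart {N : ℕ} (A : Matrix (Fin N) (Fin N) ℝ) : Matrix (Fin N) (Fin N) ℝ :=
  (2⁻¹ : ℝ) • (A - Aᵀ)

/-- The kernel `k(X,Y) = exp(τ tr(XᵀY))` on `SO(N)`. -/
def kSON {N : ℕ} (τ : ℝ) (X Y : Matrix (Fin N) (Fin N) ℝ) : ℝ :=
  Real.exp (τ * (Xᵀ * Y).trace)

/-- The Stein operator component `A_p^{ij} h = D^{ij} h + h · D^{ij} log p`, where
`D^{ij}` is the derivation along the left-invariant field `X ↦ X E_{ij}`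
(the modular term vanishes: `SO(N)` is compact, hence unimodular). -/
def steinSON {N : ℕ} (p : Matrix (Fin N) (Fin N) ℝ → ℝ) (i j : Fin N)
    (h : Matrix (Fin N) (Fin N) ℝ → ℝ) (X : Matrix (Fin N) (Fin N) ℝ) : ℝ :=
  dirDeriv h (Eb N i j) X + h X * dirDeriv (fun Z => Real.log (p Z)) (Eb N i j) X

/-- The Stein kernel `k_p(X,Y) = Σ_{i<j} Ã_p^{ij} A_p^{ij} k(X,Y)`, `A_p^{ij}` acting on
the first argument of `k` and `Ã_p^{ij}` on the second. -/
def kpSON {N : ℕ} (τ : ℝ) (p : Matrix (Fin N) (Fin N) ℝ → ℝ)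
    (X Y : Matrix (Fin N) (Fin N) ℝ) : ℝ :=
  ∑ i : Fin N, ∑ j : Fin N, if i < j then
    steinSON p i j (fun Y' => steinSON p i j (fun X' => kSON τ X' Y') X) Y
  else 0

/-- The `p`-independent term `c(X,Y) = (τ/2)(N−1) tr(XᵀY) e^{τ tr(XᵀY)}`. -/
def cSON {N : ℕ} (τ : ℝ) (X Y : Matrix (Fin N) (Fin N) ℝ) : ℝ :=
  (τ / 2) * ((N : ℝ) - 1) * (Xᵀ * Y).trace * Real.exp (τ * (Xᵀ * Y).trace)


/-! The vMF log-density `log C + tr(FᵀX)` is affine in `X`, so every derivation `D^{ij}` of it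
and of the kernel is a trace against `X E_{ij}`. The `(i,j)` summand of `k_p` is therefore
`(τ tr(E_{ij}ᵀ XᵀY E_{ij}) + tr(PᵀE_{ij}) tr(QᵀE_{ij})) k(X,Y)` with `P = Xᵀ(F+τY)` and
`Q = Yᵀ(F+τX)`. As the `E_{ij}` form an orthonormal basis of the skew matrices and
`tr(AᵀE) = tr(𝒜(A)ᵀE)` for skew `E`, the products sum to `tr(𝒜(P)ᵀ𝒜(Q))`; as
`E_{ij}E_{ij}ᵀ = (e_{ii} + e_{jj})/2`, the first terms sum to `(N-1)/2 · tr(XᵀY)`. -/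

section Derivatives

-- Any of these norms will do: they induce the product topology used by `exp` and `deriv`.
attribute [local instance] Matrix.linftyOpNormedAddCommGroup Matrix.linftyOpNormedRing
  Matrix.linftyOpNormedAlgebra

theorem hasDerivAt_trace_mul_mul_exp_smul {n : Type*} [Fintype n] [DecidableEq n]
    (M X B : Matrix n n ℝ) :
    HasDerivAt (fun t : ℝ => (M * (X * NormedSpace.exp (t • B))).trace) (M * (X * B)).trace 0 := by
  have hcurve := ((hasDerivAt_exp_smul_const (𝕂 := ℝ) B 0).const_mul X).const_mul M
  have h := (traceLinearMap n ℝ ℝ).toContinuousLinearMap.hasFDerivAt.comp_hasDerivAt 0 hcurve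
  simp only [zero_smul, NormedSpace.exp_zero, one_mul] at h
  exact h

end Derivatives

theorem trace_transpose_mul_comm {m n R : Type*} [Fintype m] [Fintype n] [CommSemiring R]
    (A B : Matrix m n R) : (Aᵀ * B).trace = (Bᵀ * A).trace := by
  rw [← trace_transpose, transpose_mul, transpose_transpose]

theorem two_nsmul_sum_ite_lt {ι M : Type*} [Fintype ι] [LinearOrder ι] [AddCommGroup M]
    (g : ι → ι → M) (hg : ∀ i j, g i j = g j i) :
    2 • ∑ i, ∑ j, (if i < j then g i j else 0) = ∑ i, ∑ j, g i j - ∑ i, g i i := by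
  have hsplit : ∀ i j, g i j = (if i < j then g i j else 0) + (if j < i then g j i else 0)
      + (if i = j then g i i else 0) := by
    intro i j
    rcases lt_trichotomy i j with h | rfl | h
    · simp [h, h.not_gt, h.ne]
    · simp
    · simp [h, h.not_gt, h.ne', hg i j]
  have hswap : ∑ i, ∑ j, (if j < i then g j i else 0)
      = ∑ i, ∑ j, (if i < j then g i j else 0) := Finset.sum_comm
  calc 2 • ∑ i, ∑ j, (if i < j then g i j else 0)
      = ∑ i, ∑ j, ((if i < j then g i j else 0) + (if j < i then g j i else 0)
          + (if i = j then g i i else 0)) - ∑ i, g i i := by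
        simp only [Finset.sum_add_distrib, hswap, Finset.sum_ite_eq, Finset.mem_univ, if_true]
        abel
    _ = ∑ i, ∑ j, g i j - ∑ i, g i i := by simp only [← hsplit]

theorem trace_transpose_mul_mul_eq {n R : Type*} [Fintype n] [CommSemiring R]
    (X E G : Matrix n n R) : ((X * E)ᵀ * G).trace = ((Xᵀ * G)ᵀ * E).trace := by
  rw [trace_transpose_mul_comm, transpose_mul, transpose_transpose, Matrix.mul_assoc]

theorem sqrt_two_div_two_mul_self : Real.sqrt 2 / 2 * (Real.sqrt 2 / 2) = 2⁻¹ := by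
  rw [div_mul_div_comm, Real.mul_self_sqrt zero_le_two]
  norm_num

theorem Eb_transpose {N : ℕ} (i j : Fin N) : (Eb N i j)ᵀ = -Eb N i j := by
  simp only [Eb, transpose_smul, transpose_sub, transpose_single, ← smul_neg, neg_sub]

theorem trace_transpose_mul_Eb {N : ℕ} (A : Matrix (Fin N) (Fin N) ℝ) (i j : Fin N) :
    (Aᵀ * Eb N i j).trace = Real.sqrt 2 / 2 * (A i j - A j i) := by
  simp [Eb, Matrix.mul_sub, trace_mul_single, trace_sub, trace_smul]

theorem Eb_mul_transpose {N : ℕ} {i j : Fin N} (hij : i ≠ j) :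
    Eb N i j * (Eb N i j)ᵀ = (2⁻¹ : ℝ) • (single i i 1 + single j j 1) := by
  rw [Eb_transpose, mul_neg, Eb, smul_mul_smul_comm, sqrt_two_div_two_mul_self]
  simp [sub_mul, mul_sub, hij, hij.symm, ← smul_neg]

theorem trace_Eb_transpose_mul_mul_Eb {N : ℕ} (M : Matrix (Fin N) (Fin N) ℝ) {i j : Fin N}
    (hij : i ≠ j) : ((Eb N i j)ᵀ * M * Eb N i j).trace = (M i i + M j j) / 2 := by
  rw [trace_mul_cycle, Eb_mul_transpose hij]
  simp [Matrix.add_mul, trace_single_mul]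
  ring

theorem trace_transpose_mul_of_transpose_eq_neg {N : ℕ} (A : Matrix (Fin N) (Fin N) ℝ)
    {E : Matrix (Fin N) (Fin N) ℝ} (hE : Eᵀ = -E) :
    (Aᵀ * E).trace = ((skewPart A)ᵀ * E).trace := by
  have hAE : (A * E).trace = -(Aᵀ * E).trace := by
    rw [← trace_transpose_mul, hE, Matrix.mul_neg, trace_neg]
  simp only [skewPart, transpose_smul, transpose_sub, transpose_transpose, smul_mul,
    Matrix.sub_mul, trace_smul, trace_sub, hAE, smul_eq_mul]
  ring

theorem sum_lt_trace_Eb_transpose_mul_mul_Eb {N : ℕ} (M : Matrix (Fin N) (Fin N) ℝ) :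
    ∑ i, ∑ j, (if i < j then ((Eb N i j)ᵀ * M * Eb N i j).trace else 0)
      = ((N : ℝ) - 1) / 2 * M.trace := by
  have hterm : ∀ i j : Fin N, (if i < j then ((Eb N i j)ᵀ * M * Eb N i j).trace else 0)
      = if i < j then (M i i + M j j) / 2 else 0 := fun i j => by
    split_ifs with h
    exacts [trace_Eb_transpose_mul_mul_Eb M h.ne, rfl]
  have hsum := two_nsmul_sum_ite_lt (fun i j : Fin N => (M i i + M j j) / 2)
    fun i j => by rw [add_comm]
  simp only [Finset.sum_add_distrib, Finset.sum_const, Finset.card_univ, Fintype.card_fin,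
    nsmul_eq_mul, ← Finset.mul_sum, ← Finset.sum_div, add_self_div_two] at hsum
  have htrace : M.trace = ∑ i, M i i := rfl
  simp only [hterm, htrace]
  linarith

theorem sum_lt_trace_Eb_mul_trace_Eb {N : ℕ} (A B : Matrix (Fin N) (Fin N) ℝ) :
    ∑ i, ∑ j, (if i < j then (Aᵀ * Eb N i j).trace * (Bᵀ * Eb N i j).trace else 0)
      = ((skewPart A)ᵀ * skewPart B).trace := by
  let g : Fin N → Fin N → ℝ := fun i j => (A i j - A j i) * (B i j - B j i) / 2
  have hterm : ∀ i j, (Aᵀ * Eb N i j).trace * (Bᵀ * Eb N i j).trace = g i j := fun i j => by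
    rw [trace_transpose_mul_Eb, trace_transpose_mul_Eb, mul_mul_mul_comm, sqrt_two_div_two_mul_self]
    ring
  have hsum := two_nsmul_sum_ite_lt g fun i j => by ring
  have hskew : ((skewPart A)ᵀ * skewPart B).trace = (∑ i, ∑ j, g i j) / 2 := by
    simp only [skewPart, trace, Matrix.diag, mul_apply, Matrix.smul_apply, Matrix.sub_apply,
      transpose_apply, smul_eq_mul, Finset.sum_div]
    rw [Finset.sum_comm]
    exact Finset.sum_congr rfl fun i _ => Finset.sum_congr rfl fun j _ => by ring
  simp only [hterm, hskew]
  simp only [g, sub_self, zero_mul, zero_div, Finset.sum_const_zero, sub_zero, two_nsmul] at hsum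
  linarith

section SteinKernel

variable {N : ℕ} {F : Matrix (Fin N) (Fin N) ℝ} {p : Matrix (Fin N) (Fin N) ℝ → ℝ} {C : ℝ}

theorem dirDeriv_log_vMF (hC : C ≠ 0) (hp : ∀ X, p X = C * Real.exp ((Fᵀ * X).trace))
    (B X : Matrix (Fin N) (Fin N) ℝ) :
    dirDeriv (fun Z => Real.log (p Z)) B X = (Fᵀ * (X * B)).trace := by
  have hlog : ∀ Z, Real.log (p Z) = Real.log C + (Fᵀ * Z).trace := fun Z => by
    rw [hp, Real.log_mul hC (Real.exp_ne_zero _), Real.log_exp]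
  simp only [dirDeriv, hlog]
  exact ((hasDerivAt_trace_mul_mul_exp_smul Fᵀ X B).const_add _).deriv

theorem dirDeriv_kSON_left (τ : ℝ) (B X Y : Matrix (Fin N) (Fin N) ℝ) :
    dirDeriv (fun X' => kSON τ X' Y) B X = τ * ((X * B)ᵀ * Y).trace * kSON τ X Y := by
  have hk : ∀ X', kSON τ X' Y = Real.exp (τ * (Yᵀ * X').trace) := fun X' => by
    rw [kSON, trace_transpose_mul_comm]
  have h := ((hasDerivAt_trace_mul_mul_exp_smul Yᵀ X B).const_mul τ).exp
  simp only [zero_smul, NormedSpace.exp_zero, mul_one] at h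
  simp only [dirDeriv, hk]
  rw [h.deriv, trace_transpose_mul_comm Y (X * B)]
  ring

theorem dirDeriv_trace_mul_kSON_right (τ : ℝ) (A G B X Y : Matrix (Fin N) (Fin N) ℝ) :
    dirDeriv (fun Y' => (Aᵀ * (G + τ • Y')).trace * kSON τ X Y') B Y
      = (τ * (Aᵀ * (Y * B)).trace + (Aᵀ * (G + τ • Y)).trace * (τ * (Xᵀ * (Y * B)).trace))
        * kSON τ X Y := by
  have hf : ∀ Y', (Aᵀ * (G + τ • Y')).trace * kSON τ X Y'
      = ((Aᵀ * G).trace + τ * (Aᵀ * Y').trace) * Real.exp (τ * (Xᵀ * Y').trace) := fun Y' => by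
    rw [kSON, Matrix.mul_add, Matrix.mul_smul, trace_add, trace_smul, smul_eq_mul]
  have h := (((hasDerivAt_trace_mul_mul_exp_smul Aᵀ Y B).const_mul τ).const_add
    (Aᵀ * G).trace).mul ((hasDerivAt_trace_mul_mul_exp_smul Xᵀ Y B).const_mul τ).exp
  simp only [zero_smul, NormedSpace.exp_zero, mul_one] at h
  simp only [dirDeriv, hf]
  refine h.deriv.trans ?_
  rw [kSON, Matrix.mul_add, Matrix.mul_smul, trace_add, trace_smul, smul_eq_mul]
  ring

theorem steinSON_kSON_left (hC : C ≠ 0) (hp : ∀ X, p X = C * Real.exp ((Fᵀ * X).trace))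
    (τ : ℝ) (i j : Fin N) (X Y : Matrix (Fin N) (Fin N) ℝ) :
    steinSON p i j (fun X' => kSON τ X' Y) X
      = ((X * Eb N i j)ᵀ * (F + τ • Y)).trace * kSON τ X Y := by
  rw [steinSON, dirDeriv_kSON_left, dirDeriv_log_vMF hC hp, trace_transpose_mul_comm F,
    Matrix.mul_add, Matrix.mul_smul, trace_add, trace_smul, smul_eq_mul]
  ring

theorem steinSON_steinSON_kSON (hC : C ≠ 0) (hp : ∀ X, p X = C * Real.exp ((Fᵀ * X).trace))
    (τ : ℝ) (i j : Fin N) (X Y : Matrix (Fin N) (Fin N) ℝ) :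
    steinSON p i j (fun Y' => steinSON p i j (fun X' => kSON τ X' Y') X) Y
      = (τ * ((Eb N i j)ᵀ * (Xᵀ * Y) * Eb N i j).trace
          + ((Xᵀ * (F + τ • Y))ᵀ * Eb N i j).trace * ((Yᵀ * (F + τ • X))ᵀ * Eb N i j).trace)
        * kSON τ X Y := by
  have hinner : (fun Y' => steinSON p i j (fun X' => kSON τ X' Y') X)
      = fun Y' => ((X * Eb N i j)ᵀ * (F + τ • Y')).trace * kSON τ X Y' :=
    funext fun Y' => steinSON_kSON_left hC hp τ i j X Y'
  have hconj : (X * Eb N i j)ᵀ * (Y * Eb N i j) = (Eb N i j)ᵀ * (Xᵀ * Y) * Eb N i j := by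
    simp only [transpose_mul, Matrix.mul_assoc]
  rw [← trace_transpose_mul_mul_eq X, ← trace_transpose_mul_mul_eq Y, ← hconj, steinSON,
    hinner, dirDeriv_trace_mul_kSON_right, dirDeriv_log_vMF hC hp, steinSON_kSON_left hC hp,
    Matrix.mul_add (Y * Eb N i j)ᵀ, Matrix.mul_smul, trace_add, trace_smul, smul_eq_mul,
    trace_transpose_mul_comm (Y * Eb N i j), trace_transpose_mul_comm (Y * Eb N i j)]
  ring

end SteinKernel

theorem kp_vMF_SON_general
    {N : ℕ} (τ : ℝ)
    (F : Matrix (Fin N) (Fin N) ℝ)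
    -- the von Mises–Fisher density `p(X|F) ∝ exp(tr(FᵀX))`
    (p : Matrix (Fin N) (Fin N) ℝ → ℝ) (C : ℝ) (hC : 0 < C)
    (hp : ∀ X, p X = C * Real.exp ((Fᵀ * X).trace)) :
    -- the Riemannian gradient of `log p` at `X` is `X 𝒜(XᵀF)` …
    (∀ X ∈ Matrix.specialOrthogonalGroup (Fin N) ℝ, ∀ i j : Fin N,
      dirDeriv (fun Z => Real.log (p Z)) (Eb N i j) X =
        ((X * skewPart (Xᵀ * F))ᵀ * (X * Eb N i j)).trace) ∧
    -- … and the Stein kernel has the stated closed form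
    (∀ X ∈ Matrix.specialOrthogonalGroup (Fin N) ℝ,
     ∀ Y ∈ Matrix.specialOrthogonalGroup (Fin N) ℝ,
      kpSON τ p X Y =
        cSON τ X Y +
        ((skewPart (Xᵀ * (F + τ • Y)))ᵀ * skewPart (Yᵀ * (F + τ • X))).trace *
          Real.exp (τ * (Xᵀ * Y).trace)) := by
  refine ⟨fun X hX i j => ?_, fun X _ Y _ => ?_⟩
  · have hXX : Xᵀ * X = 1 :=
      (mem_orthogonalGroup_iff' (Fin N) ℝ).mp (mem_specialOrthogonalGroup_iff.mp hX).1
    calc dirDeriv (fun Z => Real.log (p Z)) (Eb N i j) X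
        = ((Xᵀ * F)ᵀ * Eb N i j).trace := by
          rw [dirDeriv_log_vMF hC.ne' hp, transpose_mul, transpose_transpose, Matrix.mul_assoc]
      _ = ((skewPart (Xᵀ * F))ᵀ * Eb N i j).trace :=
          trace_transpose_mul_of_transpose_eq_neg _ (Eb_transpose i j)
      _ = ((X * skewPart (Xᵀ * F))ᵀ * (X * Eb N i j)).trace := by
          rw [transpose_mul, Matrix.mul_assoc, ← Matrix.mul_assoc Xᵀ, hXX, Matrix.one_mul]
  · have hterm : ∀ i j : Fin N,
        (if i < j then steinSON p i j (fun Y' => steinSON p i j (fun X' => kSON τ X' Y') X) Y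
          else 0)
        = τ * (if i < j then ((Eb N i j)ᵀ * (Xᵀ * Y) * Eb N i j).trace else 0) * kSON τ X Y
          + (if i < j then ((Xᵀ * (F + τ • Y))ᵀ * Eb N i j).trace
              * ((Yᵀ * (F + τ • X))ᵀ * Eb N i j).trace else 0) * kSON τ X Y := fun i j => by
      split_ifs
      · rw [steinSON_steinSON_kSON hC.ne' hp]; ring
      · ring
    rw [kpSON]
    simp only [hterm, Finset.sum_add_distrib, ← Finset.sum_mul, ← Finset.mul_sum,
      sum_lt_trace_Eb_transpose_mul_mul_Eb, sum_lt_trace_Eb_mul_trace_Eb]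
    rw [cSON, kSON]
    ring

theorem kp_vMF_SON
    {N : ℕ} (τ : ℝ) (hτ : 0 < τ)
    (F : Matrix (Fin N) (Fin N) ℝ)
    -- the von Mises–Fisher density `p(X|F) ∝ exp(tr(FᵀX))`
    (p : Matrix (Fin N) (Fin N) ℝ → ℝ) (C : ℝ) (hC : 0 < C)
    (hp : ∀ X, p X = C * Real.exp ((Fᵀ * X).trace)) :
    -- the Riemannian gradient of `log p` at `X` is `X 𝒜(XᵀF)` …
    (∀ X ∈ Matrix.specialOrthogonalGroup (Fin N) ℝ, ∀ i j : Fin N,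
      dirDeriv (fun Z => Real.log (p Z)) (Eb N i j) X =
        ((X * skewPart (Xᵀ * F))ᵀ * (X * Eb N i j)).trace) ∧
    -- … and the Stein kernel has the stated closed form
    (∀ X ∈ Matrix.specialOrthogonalGroup (Fin N) ℝ,
     ∀ Y ∈ Matrix.specialOrthogonalGroup (Fin N) ℝ,
      kpSON τ p X Y =
        cSON τ X Y +
        ((skewPart (Xᵀ * (F + τ • Y)))ᵀ * skewPart (Yᵀ * (F + τ • X))).trace *
          Real.exp (τ * (Xᵀ * Y).trace)) :=
  kp_vMF_SON_general τ F p C hC hp
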